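/- Work in the quaternion algebra over the complex numbers, with complex imaginary unit I and quaternion units i, j, k, and let ω₁ = (−1 + I√3)/2 and ω₂ = (−1 − I√3)/2 be the two primitive cube roots of unity. Set α = 1 + 2i + 4j + 8k, β = 1 + ω₁·i + ω₁²·j + k, and γ = 1 + ω₂·i + ω₂²·j + k. Then for every integer n ≥ 0, jQ^{(3)}_n = (1/7)·[ 2^{n+3}·α + (3 + 2I√3)·ω₁^n·β + (3 − 2I√3)·ω₂^n·γ ], where complex scalars act on quaternions by scalar multiplication. -/

import Mathlib

open Quaternion Complex

/-- Third order Jacobsthal-Lucas numbers. -/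
def jL3 : ℕ → ℤ
  | 0 => 2
  | 1 => 1
  | 2 => 5
  | n + 3 => jL3 (n + 2) + jL3 (n + 1) + 2 * jL3 n

/-- The quaternion unit `i` in the quaternion algebra over `ℂ`. -/
noncomputable def qi : ℍ[ℂ] := ⟨0, 1, 0, 0⟩
/-- The quaternion unit `j` in the quaternion algebra over `ℂ`. -/
noncomputable def qj : ℍ[ℂ] := ⟨0, 0, 1, 0⟩
/-- The quaternion unit `k` in the quaternion algebra over `ℂ`. -/
noncomputable def qk : ℍ[ℂ] := ⟨0, 0, 0, 1⟩

/-- The `n`-th third order Jacobsthal-Lucas quaternion, viewed in the quaternion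
algebra over `ℂ`. -/
noncomputable def jQ (n : ℕ) : ℍ[ℂ] :=
  (jL3 n : ℂ) + (jL3 (n + 1) : ℂ) * qi + (jL3 (n + 2) : ℂ) * qj + (jL3 (n + 3) : ℂ) * qk

/-- `ω₁ = (−1 + I√3)/2`, a primitive cube root of unity. -/
noncomputable def ω₁ : ℂ := (-1 + Complex.I * Real.sqrt 3) / 2
/-- `ω₂ = (−1 − I√3)/2`, the other primitive cube root of unity. -/
noncomputable def ω₂ : ℂ := (-1 - Complex.I * Real.sqrt 3) / 2

/-- `α = 1 + 2i + 4j + 8k`. -/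
noncomputable def qα : ℍ[ℂ] := 1 + 2 * qi + 4 * qj + 8 * qk
/-- `β = 1 + ω₁·i + ω₁²·j + k`. -/
noncomputable def qβ : ℍ[ℂ] := 1 + ω₁ • qi + (ω₁ ^ 2) • qj + qk
/-- `γ = 1 + ω₂·i + ω₂²·j + k`. -/
noncomputable def qγ : ℍ[ℂ] := 1 + ω₂ • qi + (ω₂ ^ 2) • qj + qk

/-! The sequence `jL3` satisfies a linear recurrence with characteristic polynomial
`X³ - X² - X - 2 = (X - 2)(X² + X + 1)`, whose roots are `2, ω₁, ω₂`, so `jL3 n` is a linear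
combination of `2 ^ n, ω₁ ^ n, ω₂ ^ n`; the coefficients are fixed by the first three values.
The quaternion `jQ n` depends linearly on the sequence, and for a geometric sequence `r ^ m` it is
`r ^ n` times the quaternion `1 + r i + r² j + r³ k`, which for `r = ω₁, ω₂` is `β, γ`
because `ω³ = 1`. -/

lemma I_mul_sqrt_three_sq : (I * Real.sqrt 3) ^ 2 = -3 := by
  rw [mul_pow, I_sq, ← ofReal_pow, Real.sq_sqrt (by norm_num)]
  push_cast
  ring

lemma ω₁_sq_add_ω₁_add_one : ω₁ ^ 2 + ω₁ + 1 = 0 := by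
  rw [ω₁]
  linear_combination (1 / 4 : ℂ) * I_mul_sqrt_three_sq

lemma ω₂_sq_add_ω₂_add_one : ω₂ ^ 2 + ω₂ + 1 = 0 := by
  rw [ω₂]
  linear_combination (1 / 4 : ℂ) * I_mul_sqrt_three_sq

section CharacteristicRoots

variable {R : Type*} [CommRing R]

lemma pow_three_eq_one_of_sq_add_add_one {ω : R} (h : ω ^ 2 + ω + 1 = 0) : ω ^ 3 = 1 := by
  linear_combination (ω - 1) * h

lemma pow_three_eq_of_sq_add_add_one {ω : R} (h : ω ^ 2 + ω + 1 = 0) :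
    ω ^ 3 = ω ^ 2 + ω + 2 := by
  linear_combination (ω - 2) * h

lemma pow_add_three_of_pow_three {r : R} (h : r ^ 3 = r ^ 2 + r + 2) (n : ℕ) :
    r ^ (n + 3) = r ^ (n + 2) + r ^ (n + 1) + 2 * r ^ n := by
  linear_combination r ^ n * h

end CharacteristicRoots

theorem jL3_binet (n : ℕ) :
    (jL3 n : ℂ) = (1 / 7 : ℂ) * (2 ^ 3 * 2 ^ n + (3 + 2 * I * Real.sqrt 3) * ω₁ ^ n
      + (3 - 2 * I * Real.sqrt 3) * ω₂ ^ n) := by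
  induction n using jL3.induct with
  | case1 =>
    rw [jL3]
    push_cast
    ring
  | case2 =>
    rw [jL3, ω₁, ω₂]
    linear_combination (-2 / 7 : ℂ) * I_mul_sqrt_three_sq
  | case3 =>
    rw [jL3, ω₁, ω₂]
    linear_combination (1 / 14 : ℂ) * I_mul_sqrt_three_sq
  | case4 n ih2 ih1 ih0 =>
    have h2 := pow_add_three_of_pow_three (r := (2 : ℂ)) (by norm_num) n
    have h₁ := pow_add_three_of_pow_three (pow_three_eq_of_sq_add_add_one ω₁_sq_add_ω₁_add_one) n
    have h₂ := pow_add_three_of_pow_three (pow_three_eq_of_sq_add_add_one ω₂_sq_add_ω₂_add_one) n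
    simp only [Nat.succ_eq_add_one, jL3]
    push_cast
    linear_combination ih2 + ih1 + 2 * ih0 - (8 / 7 : ℂ) * h2
      - (1 / 7 : ℂ) * (3 + 2 * I * Real.sqrt 3) * h₁ - (1 / 7 : ℂ) * (3 - 2 * I * Real.sqrt 3) * h₂

noncomputable def quatOfSeq (n : ℕ) : (ℕ → ℂ) →ₗ[ℂ] ℍ[ℂ] where
  toFun a := a n • 1 + a (n + 1) • qi + a (n + 2) • qj + a (n + 3) • qk
  map_add' a b := by simp only [Pi.add_apply]; module
  map_smul' c a := by simp only [Pi.smul_apply, smul_eq_mul, RingHom.id_apply]; module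

lemma quatOfSeq_apply (n : ℕ) (a : ℕ → ℂ) :
    quatOfSeq n a = a n • 1 + a (n + 1) • qi + a (n + 2) • qj + a (n + 3) • qk := rfl

lemma jQ_eq_quatOfSeq (n : ℕ) : jQ n = quatOfSeq n (fun m ↦ (jL3 m : ℂ)) := by
  rw [jQ, quatOfSeq_apply, ← Algebra.algebraMap_eq_smul_one]
  simp only [coe_mul_eq_smul]
  rfl

lemma quatOfSeq_pow (r : ℂ) (n : ℕ) : quatOfSeq n (r ^ ·) = r ^ n • quatOfSeq 0 (r ^ ·) := by
  simp only [quatOfSeq_apply, pow_add, mul_smul, smul_add, zero_add, pow_zero, one_smul]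

lemma qα_eq_quatOfSeq : qα = quatOfSeq 0 (2 ^ ·) := by
  rw [qα, quatOfSeq_apply]
  norm_num [← coe_mul_eq_smul]
  rfl

lemma quatOfSeq_pow_of_sq_add_add_one {ω : ℂ} (h : ω ^ 2 + ω + 1 = 0) :
    quatOfSeq 0 (ω ^ ·) = 1 + ω • qi + (ω ^ 2) • qj + qk := by
  simp [quatOfSeq_apply, pow_three_eq_one_of_sq_add_add_one h]

theorem third_order_jacobsthal_lucas_quaternion_binet (n : ℕ) :
    jQ n = (1 / 7 : ℂ) •
      ((2 ^ (n + 3) : ℂ) • qα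
        + ((3 + 2 * Complex.I * Real.sqrt 3) * ω₁ ^ n) • qβ
        + ((3 - 2 * Complex.I * Real.sqrt 3) * ω₂ ^ n) • qγ) := by
  have hseq : (fun m ↦ (jL3 m : ℂ)) = (1 / 7 : ℂ) • ((2 ^ 3 : ℂ) • (2 ^ ·)
      + (3 + 2 * I * Real.sqrt 3) • (ω₁ ^ ·) + (3 - 2 * I * Real.sqrt 3) • (ω₂ ^ ·)) := by
    funext m
    simpa using jL3_binet m
  rw [jQ_eq_quatOfSeq, hseq]
  simp only [map_smul, map_add, quatOfSeq_pow 2 n, quatOfSeq_pow ω₁ n, quatOfSeq_pow ω₂ n]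
  rw [← qα_eq_quatOfSeq, qβ, qγ, quatOfSeq_pow_of_sq_add_add_one ω₁_sq_add_ω₁_add_one,
    quatOfSeq_pow_of_sq_add_add_one ω₂_sq_add_ω₂_add_one, pow_add]
  module
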